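/- Nonstandard characterization of the derivative: f : ℝ → ℝ has derivative L at a real point a if and only if for every nonzero infinitesimal dx, (f*(a + dx) − f(a))/dx is infinitely close to L. -/
import Mathlib


open Hyperreal Filter Topology

theorem aux_isSt_iff_infinitesimal_sub {x : ℝ*} {r : ℝ} :
    IsSt x r ↔ Infinitesimal (x - r) := by
  rw [Infinitesimal, isSt_iff_abs_sub_lt_delta, isSt_iff_abs_sub_lt_delta]
  simp

/-- The natural extension of `f : ℝ → ℝ` to the hyperreals. -/
noncomputable def extend (f : ℝ → ℝ) : ℝ* → ℝ* := fun x =>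
  (x : Filter.Germ (Filter.hyperfilter ℕ : Filter ℕ) ℝ).map f

theorem hasDerivAt_iff_infinitesimal (f : ℝ → ℝ) (a L : ℝ) :
    HasDerivAt f L a ↔
      ∀ dx : ℝ*, dx ≠ 0 → Infinitesimal dx →
        Infinitesimal ((extend f (a + dx) - f a) / dx - L) := by
  set g : ℝ → ℝ := fun t => (f (a + t) - f a) / t with hg
  have hderiv : HasDerivAt f L a ↔ Tendsto g (𝓝[≠] (0:ℝ)) (𝓝 L) := by
    rw [hasDerivAt_iff_tendsto_slope_zero]
    simp only [smul_eq_mul, hg, div_eq_inv_mul]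
  have key : ∀ x : ℕ → ℝ,
      ((extend f ((a:ℝ*) + ofSeq x) - (f a : ℝ*)) / ofSeq x - (L:ℝ*))
        = ofSeq (fun n => g (x n) - L) := fun _ => rfl
  rw [hderiv]
  constructor
  · intro ht dx hne hinf
    obtain ⟨x, rfl⟩ := ofSeq_surjective dx
    have h0 : Tendsto x (↑(hyperfilter ℕ)) (𝓝 (0:ℝ)) :=
      isSt_ofSeq_iff_tendsto.1 hinf
    have hne' : ∀ᶠ n in ↑(hyperfilter ℕ), x n ≠ 0 := by
      rw [Ultrafilter.eventually_not]
      intro h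
      exact hne (Germ.coe_eq.2 h)
    have hx : Tendsto x (↑(hyperfilter ℕ)) (𝓝[≠] (0:ℝ)) :=
      tendsto_nhdsWithin_iff.2 ⟨h0, hne'⟩
    have : Tendsto (fun n => g (x n)) (↑(hyperfilter ℕ)) (𝓝 L) := ht.comp hx
    have hst : IsSt (ofSeq (fun n => g (x n))) L := isSt_ofSeq_iff_tendsto.2 this
    rw [key]
    exact aux_isSt_iff_infinitesimal_sub.1 hst
  · intro H
    by_contra hnt
    rw [Metric.tendsto_nhdsWithin_nhds] at hnt
    push_neg at hnt
    obtain ⟨eps, heps, hcontra⟩ := hnt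
    choose x hx1 hx2 hx3 using fun n : ℕ =>
      hcontra (1 / (n + 1)) (Nat.one_div_pos_of_nat)
    have hxne : ∀ n, x n ≠ 0 := fun n => Set.mem_compl_singleton_iff.1 (hx1 n)
    have hx0 : Tendsto x atTop (𝓝 (0:ℝ)) := by
      apply squeeze_zero_norm (fun n => (le_of_lt ?_)) tendsto_one_div_add_atTop_nhds_zero_nat
      simpa [Real.dist_eq] using hx2 n
    have hinf : Infinitesimal (ofSeq x) := infinitesimal_of_tendsto_zero hx0
    have hne : ofSeq x ≠ 0 := by
      intro h
      have := Germ.coe_eq.1 h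
      rcases this.exists with ⟨n, hn⟩
      exact hxne n hn
    have := H (ofSeq x) hne hinf
    rw [key] at this
    have hst : IsSt (ofSeq (fun n => g (x n))) L := aux_isSt_iff_infinitesimal_sub.2 this
    have htend : Tendsto (fun n => g (x n)) (↑(hyperfilter ℕ)) (𝓝 L) :=
      isSt_ofSeq_iff_tendsto.1 hst
    have hev : ∀ᶠ n in ↑(hyperfilter ℕ), dist (g (x n)) L < eps :=
      htend (Metric.ball_mem_nhds L heps)
    rcases hev.exists with ⟨n, hn⟩
    exact absurd hn (not_lt.2 (hx3 n))
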